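/- Let L be the 2-dimensional Lie algebra with basis e₁, e₂ and bracket [e₁,e₂] = e₂. Define Δ: L → L⊗L by Δ(e₁) = 0, Δ(e₂) = e₁⊗e₂. Then (L, Δ) is a Novikov coalgebra and Δ([a,b]) = a.Δ(b) − (id⊗ad(b))(Δ(a) + τΔ(a)) for all a, b ∈ L, where a.(x⊗y) = [a,x]⊗y + x⊗[a,y]; i.e. (L, [·,·], Δ) is a GD bialgebra of Lie type. -/
import Mathlib

open scoped TensorProduct

def IsNovikov {A : Type*} [AddCommGroup A] (circ : A → A → A) : Prop :=
  (∀ a b c : A, circ (circ a b) c - circ a (circ b c) = circ (circ b a) c - circ b (circ a c)) ∧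
  (∀ a b c : A, circ (circ a b) c = circ (circ a c) b)

def IsLieBr {A : Type*} [AddCommGroup A] (br : A → A → A) : Prop :=
  (∀ a b : A, br a b = - br b a) ∧
  (∀ a b c : A, br (br a b) c + br (br b c) a + br (br c a) b = 0)

def IsGD {A : Type*} [AddCommGroup A] (circ br : A → A → A) : Prop :=
  IsNovikov circ ∧ IsLieBr br ∧
  (∀ a b c : A, br (circ a b) c - br (circ a c) b + circ (br a b) c
      - circ (br a c) b - circ a (br b c) = 0)

noncomputable def tau (k A : Type*) [Field k] [AddCommGroup A] [Module k A] :
    A ⊗[k] A →ₗ[k] A ⊗[k] A := (TensorProduct.comm k A A).toLinearMap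

noncomputable def asr (k A : Type*) [Field k] [AddCommGroup A] [Module k A] :
    (A ⊗[k] A) ⊗[k] A →ₗ[k] A ⊗[k] (A ⊗[k] A) := (TensorProduct.assoc k A A A).toLinearMap

noncomputable def m12 (k A : Type*) [Field k] [AddCommGroup A] [Module k A] :
    A ⊗[k] (A ⊗[k] A) →ₗ[k] A ⊗[k] (A ⊗[k] A) :=
  (asr k A) ∘ₗ (TensorProduct.map (tau k A) (LinearMap.id : A →ₗ[k] A)) ∘ₗ
    (TensorProduct.assoc k A A A).symm.toLinearMap

/-- The Novikov coalgebra axioms. -/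
def IsNovikovCo {k A : Type*} [Field k] [AddCommGroup A] [Module k A]
    (Δ : A →ₗ[k] A ⊗[k] A) : Prop :=
  (∀ a : A,
    TensorProduct.map (LinearMap.id : A →ₗ[k] A) Δ (Δ a)
      - m12 k A (TensorProduct.map (LinearMap.id : A →ₗ[k] A) Δ (Δ a))
    = asr k A (TensorProduct.map Δ (LinearMap.id : A →ₗ[k] A) (Δ a))
      - m12 k A (asr k A (TensorProduct.map Δ (LinearMap.id : A →ₗ[k] A) (Δ a)))) ∧
  (∀ a : A,
    m12 k A (TensorProduct.map (LinearMap.id : A →ₗ[k] A) Δ (tau k A (Δ a)))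
    = asr k A (TensorProduct.map Δ (LinearMap.id : A →ₗ[k] A) (Δ a)))

/-- The Lie coalgebra axioms. -/
def IsLieCo {k A : Type*} [Field k] [AddCommGroup A] [Module k A]
    (δ : A →ₗ[k] A ⊗[k] A) : Prop :=
  (∀ a : A, δ a = - tau k A (δ a)) ∧
  (∀ a : A,
    TensorProduct.map (LinearMap.id : A →ₗ[k] A) δ (δ a)
      - m12 k A (TensorProduct.map (LinearMap.id : A →ₗ[k] A) δ (δ a))
    = asr k A (TensorProduct.map δ (LinearMap.id : A →ₗ[k] A) (δ a)))

/-- The compatibility condition between the Novikov cooperation and the Lie cooperation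
in a Gel'fand-Dorfman coalgebra. -/
def GDCoCompat {k A : Type*} [Field k] [AddCommGroup A] [Module k A]
    (Δ δ : A →ₗ[k] A ⊗[k] A) : Prop :=
  ∀ a : A,
    TensorProduct.map (LinearMap.id : A →ₗ[k] A) δ (Δ a)
      - m12 k A (TensorProduct.map (LinearMap.id : A →ₗ[k] A) Δ (δ a))
      + m12 k A (TensorProduct.map (LinearMap.id : A →ₗ[k] A) δ (tau k A (Δ a)))
    = asr k A (TensorProduct.map Δ (LinearMap.id : A →ₗ[k] A) (δ a))
      + asr k A (TensorProduct.map δ (LinearMap.id : A →ₗ[k] A) (Δ a))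

def IsGDCoalgebra {k A : Type*} [Field k] [AddCommGroup A] [Module k A]
    (Δ δ : A →ₗ[k] A ⊗[k] A) : Prop :=
  IsNovikovCo Δ ∧ IsLieCo δ ∧ GDCoCompat Δ δ
/-- The Lie bracket on `k²` with `[e₁, e₂] = e₂`. -/
noncomputable def br6 (k : Type*) [Field k] : (k × k) →ₗ[k] (k × k) →ₗ[k] (k × k) :=
  LinearMap.mk₂ k (fun a b => ((0 : k), a.1 * b.2 - a.2 * b.1))
    (by intro m₁ m₂ n; simp [Prod.ext_iff]; ring)
    (by intro c m n; simp [Prod.ext_iff, smul_eq_mul]; ring)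
    (by intro m n₁ n₂; simp [Prod.ext_iff]; ring)
    (by intro c m n; simp [Prod.ext_iff, smul_eq_mul]; ring)

/-- `Δ(e₁) = 0`, `Δ(e₂) = e₁ ⊗ e₂`. -/
noncomputable def Delta6 (k : Type*) [Field k] : (k × k) →ₗ[k] (k × k) ⊗[k] (k × k) :=
  (LinearMap.snd k k k).smulRight (((1, 0) : k × k) ⊗ₜ[k] ((0, 1) : k × k))


section aux
variable (k : Type*) [Field k]

lemma Delta6_apply (a : k × k) :
    Delta6 k a = a.2 • (((1,0) : k × k) ⊗ₜ[k] ((0,1) : k × k)) := rfl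

lemma br6_apply (a b : k × k) : br6 k a b = ((0:k), a.1*b.2 - a.2*b.1) := rfl

lemma tau_tmul (x y : k × k) : tau k (k × k) (x ⊗ₜ[k] y) = y ⊗ₜ[k] x := rfl

lemma asr_tmul (x y z : k × k) :
    asr k (k × k) ((x ⊗ₜ[k] y) ⊗ₜ[k] z) = x ⊗ₜ[k] (y ⊗ₜ[k] z) := rfl

lemma m12_tmul (x y z : k × k) :
    m12 k (k × k) (x ⊗ₜ[k] (y ⊗ₜ[k] z)) = y ⊗ₜ[k] (x ⊗ₜ[k] z) := rfl

end aux

theorem stmt6 (k : Type*) [Field k] :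
    IsNovikovCo (Delta6 k) ∧
    (∀ a b : k × k,
      Delta6 k (br6 k a b)
        = (TensorProduct.map (br6 k a) (LinearMap.id : (k × k) →ₗ[k] k × k)
            + TensorProduct.map (LinearMap.id : (k × k) →ₗ[k] k × k) (br6 k a))
            (Delta6 k b)
          - TensorProduct.map (LinearMap.id : (k × k) →ₗ[k] k × k) (br6 k b)
            (Delta6 k a + tau k (k × k) (Delta6 k a))) := by
  have hΔ2 : Delta6 k ((0,1) : k × k)
      = ((1,0) : k × k) ⊗ₜ[k] ((0,1) : k × k) := by
    rw [Delta6_apply]; simp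
  have hΔ1 : Delta6 k ((1,0) : k × k) = 0 := by
    rw [Delta6_apply]; simp
  have key : ∀ a : k × k,
      TensorProduct.map (LinearMap.id : (k×k) →ₗ[k] k×k) (Delta6 k) (Delta6 k a)
        = a.2 • (((1,0):k×k) ⊗ₜ[k] (((1,0):k×k) ⊗ₜ[k] ((0,1):k×k))) := by
    intro a
    rw [Delta6_apply, map_smul, TensorProduct.map_tmul, LinearMap.id_coe, id_eq, hΔ2]
  have key2 : ∀ a : k × k,
      TensorProduct.map (Delta6 k) (LinearMap.id : (k×k) →ₗ[k] k×k) (Delta6 k a)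
        = 0 := by
    intro a
    rw [Delta6_apply, map_smul, TensorProduct.map_tmul, hΔ1,
      TensorProduct.zero_tmul, smul_zero]
  refine ⟨⟨fun a => ?_, fun a => ?_⟩, fun a b => ?_⟩
  · rw [key, key2, LinearMap.map_zero, LinearMap.map_zero, map_smul, m12_tmul,
      sub_self, sub_self]
  · rw [key2, LinearMap.map_zero, Delta6_apply, map_smul,
      tau_tmul, map_smul, TensorProduct.map_tmul, LinearMap.id_coe, id_eq, hΔ1,
      TensorProduct.tmul_zero, smul_zero, LinearMap.map_zero]
  · have hbr1 : ∀ c : k × k, br6 k c ((1,0):k×k) = (-c.2) • ((0,1):k×k) := by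
      intro c; rw [br6_apply]; simp [Prod.ext_iff]
    have hbr2 : ∀ c : k × k, br6 k c ((0,1):k×k) = c.1 • ((0,1):k×k) := by
      intro c; rw [br6_apply]; simp [Prod.ext_iff]
    simp only [Delta6_apply, br6_apply, map_smul, map_add, LinearMap.add_apply,
      tau_tmul, TensorProduct.map_tmul, LinearMap.id_coe, id_eq, hbr1, hbr2,
      TensorProduct.smul_tmul', TensorProduct.tmul_smul, smul_smul]
    simp only [← TensorProduct.smul_tmul']
    module
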